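/- arXiv:2409.03873 — 2 statements merged into one kernel-verified Lean document; each statement's English description precedes it below -/
import Mathlib

section
/- Let r and t be positive integers and b a positive real. Let G be a finite simple graph whose vertex set is partitioned into sets V_1, …, V_r, each of size exactly t, such that for all distinct i,j ∈ [r] the induced subgraph G[V_i ∪ V_j] is b-degenerate. If t ≥ 17·(r−1)·b, then G contains an independent set {v_1, …, v_r} with v_i ∈ V_i for each i ∈ [r]. -/
open Classical

section Defs

variable {V : Type}

/-- A directed walk (nonempty list of vertices, consecutive vertices joined by arcs)
staying inside the vertex set `S`, going from `u` to `v`. -/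
def WalkIn (D : V → V → Prop) (S : Set V) (u v : V) : Prop :=
  ∃ w : List V, w ≠ [] ∧ w.Chain' D ∧ (∀ x ∈ w, x ∈ S) ∧
    w.head? = some u ∧ w.getLast? = some v

/-- The sub-digraph induced by `S` is strongly connected. -/
def IsStrongSet (D : V → V → Prop) (S : Set V) : Prop :=
  ∀ u ∈ S, ∀ v ∈ S, WalkIn D S u v

/-- A digraph is `k`-strong if it has at least `k+1` vertices and deleting any
set of fewer than `k` vertices leaves it strongly connected. -/
def IsKStrong [Fintype V] (D : V → V → Prop) (k : ℕ) : Prop :=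
  k + 1 ≤ Fintype.card V ∧
    ∀ S : Finset V, S.card < k → IsStrongSet D {v | v ∉ (S : Set V)}

/-- A directed path, represented as a nonempty list of distinct vertices with an arc
between consecutive vertices. -/
def IsPathList (D : V → V → Prop) (p : List V) : Prop :=
  p ≠ [] ∧ p.Nodup ∧ p.Chain' D

/-- A directed path from `u` to `v`. -/
def IsPathFromTo (D : V → V → Prop) (u v : V) (p : List V) : Prop :=
  IsPathList D p ∧ p.head? = some u ∧ p.getLast? = some v

/-- A bramble with `m` bags in the digraph `D`: each bag is a nonempty set of vertices
inducing a strongly connected subdigraph, and any two bags either intersect or are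
joined by arcs in both directions. -/
structure Bramble (D : V → V → Prop) (m : ℕ) where
  bag : Fin m → Set V
  nonempty : ∀ i, (bag i).Nonempty
  strong : ∀ i, IsStrongSet D (bag i)
  touch : ∀ i j : Fin m, (bag i ∩ bag j).Nonempty ∨
    ((∃ x ∈ bag i, ∃ y ∈ bag j, D x y) ∧ (∃ x ∈ bag j, ∃ y ∈ bag i, D x y))

/-- A bramble has congestion (at most) `c` if every vertex lies in at most `c` bags. -/
def Bramble.HasCongestion {D : V → V → Prop} {m : ℕ} (B : Bramble D m) (c : ℕ) : Prop :=
  ∀ v : V, Nat.card {i : Fin m // v ∈ B.bag i} ≤ c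

/-- `D` is `(k,c)`-linked: for every two disjoint ordered `k`-sets `s`, `t` of vertices
there are paths `P i` from `s i` to `t i` such that each vertex lies on at most `c`
of the paths. -/
def KCLinked (D : V → V → Prop) (k c : ℕ) : Prop :=
  ∀ s t : Fin k → V, Function.Injective s → Function.Injective t →
    (∀ i j : Fin k, s i ≠ t j) →
    ∃ P : Fin k → List V,
      (∀ i, IsPathFromTo D (s i) (t i) (P i)) ∧
      ∀ v : V, Nat.card {i : Fin k // v ∈ P i} ≤ c

/-- An `(A,B)`-linkage of size `n`: `n` pairwise vertex-disjoint directed paths,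
each starting in `A` and ending in `B`. -/
def IsLinkage (D : V → V → Prop) (A B : Set V) {n : ℕ} (L : Fin n → List V) : Prop :=
  (∀ i, ∃ u ∈ A, ∃ v ∈ B, IsPathFromTo D u v (L i)) ∧
    ∀ i j : Fin n, i ≠ j → ∀ x, x ∈ L i → x ∉ L j

/-- `A` is well-linked in `D`. -/
def WellLinked (D : V → V → Prop) (A : Finset V) : Prop :=
  ∀ X Y : Finset V, X ⊆ A → Y ⊆ A → Disjoint X Y → X.card = Y.card →
    ∃ L : Fin X.card → List V, IsLinkage D (↑X) (↑Y) L

/-- An `(a,b)`-path system in `D`. -/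
structure PathSystem [DecidableEq V] (D : V → V → Prop) (a b : ℕ) where
  Ain : Fin a → Finset V
  Aout : Fin a → Finset V
  Ain_card : ∀ i, (Ain i).card = b
  Aout_card : ∀ i, (Aout i).card = b
  Ain_wl : ∀ i, WellLinked D (Ain i)
  Aout_wl : ∀ i, WellLinked D (Aout i)
  L : Fin a → Fin a → Fin b → List V
  L_linkage : ∀ i j : Fin a, i ≠ j → IsLinkage D (↑(Aout i)) (↑(Ain j)) (L i j)
  P : Fin a → List V
  P_path : ∀ i, IsPathList D (P i)
  P_disj : ∀ i j : Fin a, i ≠ j → ∀ x ∈ P i, x ∉ P j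
  P_cover : ∀ i : Fin a, ∀ x ∈ Ain i ∪ Aout i, x ∈ P i
  P_order : ∀ i : Fin a, ∀ x ∈ Ain i, ∀ y ∈ Aout i,
    (P i).idxOf x < (P i).idxOf y

/-- The intersection graph of a family of lists of vertices (paths/walks):
two distinct members are adjacent iff they share a vertex. -/
def interGraph {ι : Type} (F : ι → List V) : SimpleGraph ι where
  Adj i j := i ≠ j ∧ ∃ x : V, x ∈ F i ∧ x ∈ F j
  symm := ⟨by rintro i j ⟨hne, x, hx, hy⟩; exact ⟨hne.symm, x, hy, hx⟩⟩
  loopless := ⟨by rintro i ⟨hne, -⟩; exact hne rfl⟩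

/-- A simple graph is `b`-degenerate (for a real `b`) if every nonempty (induced)
subgraph has a vertex of degree at most `b`. -/
def Degenerate {W : Type} (G : SimpleGraph W) (b : ℝ) : Prop :=
  ∀ S : Finset W, S.Nonempty → ∃ v ∈ S, (({u : W | u ∈ S ∧ G.Adj v u}).ncard : ℝ) ≤ b

/-- The subgraph of `G` induced by `A` is `b`-degenerate. -/
def DegenerateOn {W : Type} (G : SimpleGraph W) (A : Set W) (b : ℝ) : Prop :=
  ∀ S : Finset W, (S : Set W) ⊆ A → S.Nonempty →
    ∃ v ∈ S, (({u : W | u ∈ S ∧ G.Adj v u}).ncard : ℝ) ≤ b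

/-- `S` is `Z`-normal in `D`: `S` is disjoint from `Z`, and every directed walk in
`D - Z` beginning and ending in `S` has all its vertices in `S`. -/
def ZNormal (D : V → V → Prop) (Z S : Set V) : Prop :=
  Disjoint S Z ∧
    ∀ (w : List V) (u v : V), w.Chain' D → (∀ x ∈ w, x ∉ Z) →
      w.head? = some u → w.getLast? = some v → u ∈ S → v ∈ S →
      ∀ x ∈ w, x ∈ S

/-- An arboreal decomposition of `D`: an arborescence (encoded by a finite node type
with a root and a parent function under which every node reaches the root), a
partition `W` of the vertices indexed by the nodes, and arc-sets `X` (the arc of a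
non-root node `r` goes from `parent r` to `r`) such that for each arc the union of
the `W`-sets at or below its head is `X`-normal. -/
structure ArborealDecomp (D : V → V → Prop) where
  ι : Type
  fin : Fintype ι
  root : ι
  parent : ι → ι
  parent_root : parent root = root
  reach_root : ∀ r : ι, ∃ n : ℕ, parent^[n] r = root
  W : ι → Set V
  X : ι → Set V
  part : ∀ v : V, ∃! r : ι, v ∈ W r
  normal : ∀ r : ι, r ≠ root →
    ZNormal D (X r) (⋃ r' ∈ {r' : ι | ∃ n : ℕ, parent^[n] r' = r}, W r')

/-- The bag associated to a node `r`: `W r` together with the `X`-sets of all arcs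
incident to `r`. -/
def ArborealDecomp.nodeBag {D : V → V → Prop} (T : ArborealDecomp D) (r : T.ι) : Set V :=
  T.W r ∪ ⋃ c ∈ {c : T.ι | c ≠ T.root ∧ (c = r ∨ T.parent c = r)}, T.X c

/-- The directed treewidth of `D` is at least `x`: every arboreal decomposition has
width at least `x`. -/
def DtwGE [Fintype V] (D : V → V → Prop) (x : ℝ) : Prop :=
  ∀ T : ArborealDecomp D, ∃ r : T.ι, x ≤ ((T.nodeBag r).ncard : ℝ) - 1

end Defs

section IT
variable {W : Type} [Fintype W] {r : ℕ}

noncomputable def ITset (G : SimpleGraph W) (P : Fin r → Finset W) (w₀ : W)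
    (S : Finset (Fin r)) : Finset (Fin r → W) :=
  Finset.univ.filter (fun f => (∀ i : Fin r, if i ∈ S then f i ∈ P i else f i = w₀) ∧
    ∀ i ∈ S, ∀ j ∈ S, i ≠ j → ¬ G.Adj (f i) (f j))

lemma mem_ITset {G : SimpleGraph W} {P : Fin r → Finset W} {w₀ : W} {S : Finset (Fin r)}
    {f : Fin r → W} : f ∈ ITset G P w₀ S ↔
    (∀ i : Fin r, if i ∈ S then f i ∈ P i else f i = w₀) ∧
    ∀ i ∈ S, ∀ j ∈ S, i ≠ j → ¬ G.Adj (f i) (f j) := by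
  simp [ITset]

/-- fiber bound: number of f in ITset S with f j = u is at most |ITset (S.erase j)| -/
lemma fiber_le (G : SimpleGraph W) (P : Fin r → Finset W) (w₀ : W) (S : Finset (Fin r))
    (j : Fin r) (u : W) :
    ((ITset G P w₀ S).filter (fun g => g j = u)).card ≤ (ITset G P w₀ (S.erase j)).card := by
  apply Finset.card_le_card_of_injOn (fun g => Function.update g j w₀)
  · intro g hg
    rw [Finset.mem_coe, Finset.mem_filter] at hg
    obtain ⟨hg, _⟩ := hg
    rw [mem_ITset] at hg; rw [Finset.mem_coe, mem_ITset]; beta_reduce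
    obtain ⟨hmem, hind⟩ := hg
    constructor
    · intro i
      by_cases hij : i = j
      · subst hij; simp [Function.update_self, Finset.notMem_erase i S]
      · rw [Function.update_of_ne hij]
        have := hmem i
        by_cases hiS : i ∈ S
        · simp [Finset.mem_erase, hij, hiS] at this ⊢; exact this
        · simp [hiS, Finset.mem_erase] at this ⊢; exact this
    · intro a ha c hc hac
      rw [Finset.mem_erase] at ha hc
      rw [Function.update_of_ne ha.1, Function.update_of_ne hc.1]
      exact hind a ha.2 c hc.2 hac
  · intro g1 hg1 g2 hg2 heq
    simp only [Finset.coe_filter, Set.mem_setOf_eq] at hg1 hg2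
    funext x
    by_cases hxj : x = j
    · subst hxj; rw [hg1.2, hg2.2]
    · have := congrFun heq x
      simp only [Function.update_of_ne hxj] at this
      exact this
end IT

section Key
variable {W : Type} [Fintype W] {r : ℕ}

lemma ext_le (G : SimpleGraph W) (P : Fin r → Finset W) (w₀ : W) (S : Finset (Fin r))
    (i : Fin r) (hi : i ∈ S) :
    (((ITset G P w₀ (S.erase i)) ×ˢ (P i)).filter
        (fun p => ∀ j ∈ S.erase i, ¬ G.Adj p.2 (p.1 j))).card ≤ (ITset G P w₀ S).card := by
  set S' := S.erase i with hS'
  apply Finset.card_le_card_of_injOn (fun p => Function.update p.1 i p.2)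
  · intro p hp
    rw [Finset.mem_coe, Finset.mem_filter, Finset.mem_product] at hp
    obtain ⟨⟨hg, hv⟩, hgood⟩ := hp
    rw [mem_ITset] at hg; rw [Finset.mem_coe, mem_ITset]; beta_reduce
    obtain ⟨hmem, hind⟩ := hg
    constructor
    · intro k
      by_cases hki : k = i
      · subst hki; simp [Function.update_self, hi, hv]
      · rw [Function.update_of_ne hki]
        have := hmem k
        by_cases hkS : k ∈ S
        · have : k ∈ S' := Finset.mem_erase.mpr ⟨hki, hkS⟩
          have h2 := hmem k
          simp only [this, if_true] at h2
          simp [hkS, h2]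
        · have hkS' : k ∉ S' := fun h => hkS (Finset.mem_of_mem_erase h)
          have h2 := hmem k
          simp only [hkS', if_false] at h2
          simp [hkS, h2]
    · intro a ha c hc hac
      by_cases hai : a = i
      · have hci : c ≠ i := fun h => hac (hai.trans h.symm)
        rw [hai, Function.update_self, Function.update_of_ne hci]
        exact hgood c (Finset.mem_erase.mpr ⟨hci, hc⟩)
      · rw [Function.update_of_ne hai]
        by_cases hci : c = i
        · rw [hci, Function.update_self]
          intro hadj
          exact hgood a (Finset.mem_erase.mpr ⟨hai, ha⟩) hadj.symm
        · rw [Function.update_of_ne hci]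
          exact hind a (Finset.mem_erase.mpr ⟨hai, ha⟩) c (Finset.mem_erase.mpr ⟨hci, hc⟩) hac
  · intro p1 hp1 p2 hp2 heq
    simp only [Finset.coe_filter, Set.mem_setOf_eq, Finset.mem_product] at hp1 hp2
    have hval : p1.2 = p2.2 := by
      have := congrFun heq i
      simpa [Function.update_self] using this
    have hw1 : p1.1 i = w₀ := by
      have := (mem_ITset.mp hp1.1.1).1 i
      simpa [hS', Finset.notMem_erase i S] using this
    have hw2 : p2.1 i = w₀ := by
      have := (mem_ITset.mp hp2.1.1).1 i
      simpa [hS', Finset.notMem_erase i S] using this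
    have hfun : p1.1 = p2.1 := by
      funext x
      by_cases hxi : x = i
      · subst hxi; rw [hw1, hw2]
      · have := congrFun heq x
        simp only [Function.update_of_ne hxi] at this
        exact this
    exact Prod.ext hfun hval

end Key

/-- ordered adjacent pairs in a finset contained in a b-degenerate set -/
lemma pairs_card_le {W : Type} {G : SimpleGraph W} {A : Set W} {b : ℝ}
    (hA : DegenerateOn G A b) :
    ∀ (n : ℕ) (F : Finset W), F.card ≤ n → (F : Set W) ⊆ A →
      ((((F ×ˢ F).filter (fun p => G.Adj p.1 p.2)).card : ℝ)) ≤ 2 * b * F.card := by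
  intro n
  induction n with
  | zero =>
    intro F hF _
    rw [Nat.le_zero, Finset.card_eq_zero] at hF
    subst hF; simp
  | succ n ih =>
    intro F hF hFA
    rcases F.eq_empty_or_nonempty with rfl | hne
    · simp
    obtain ⟨v, hv, hdeg⟩ := hA F hFA hne
    have hset : {u : W | u ∈ F ∧ G.Adj v u} = ↑(F.filter (fun u => G.Adj v u)) := by
      ext u; simp
    rw [hset, Set.ncard_coe_finset] at hdeg
    set F' := F.erase v with hF'
    set D := F.filter (fun u => G.Adj v u) with hD
    have hsub : ((F ×ˢ F).filter (fun p => G.Adj p.1 p.2)) ⊆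
        ((F' ×ˢ F').filter (fun p => G.Adj p.1 p.2)) ∪ ({v} ×ˢ D) ∪ (D ×ˢ {v}) := by
      intro p hp
      simp only [Finset.mem_filter, Finset.mem_product] at hp
      obtain ⟨⟨h1, h2⟩, hadj⟩ := hp
      by_cases e1 : p.1 = v
      · refine Finset.mem_union_left _ (Finset.mem_union_right _ ?_)
        simp only [Finset.mem_product, Finset.mem_singleton, hD, Finset.mem_filter]
        exact ⟨e1, h2, e1 ▸ hadj⟩
      by_cases e2 : p.2 = v
      · refine Finset.mem_union_right _ ?_
        simp only [Finset.mem_product, Finset.mem_singleton, hD, Finset.mem_filter]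
        exact ⟨⟨h1, (e2 ▸ hadj).symm⟩, e2⟩
      · refine Finset.mem_union_left _ (Finset.mem_union_left _ ?_)
        simp only [Finset.mem_filter, Finset.mem_product, Finset.mem_erase, F']
        exact ⟨⟨⟨e1, h1⟩, ⟨e2, h2⟩⟩, hadj⟩
    have hcard := Finset.card_le_card hsub
    have hu1 := Finset.card_union_le (((F' ×ˢ F').filter (fun p => G.Adj p.1 p.2)) ∪
          ({v} ×ˢ D)) (D ×ˢ {v})
    have hu2 := Finset.card_union_le ((F' ×ˢ F').filter (fun p => G.Adj p.1 p.2)) ({v} ×ˢ D)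
    have hprod1 : (({v} : Finset W) ×ˢ D).card = D.card := by simp
    have hprod2 : (D ×ˢ ({v} : Finset W)).card = D.card := by simp
    have hF'card : F'.card ≤ n := by
      have h1 : F'.card < F.card := Finset.card_erase_lt_of_mem hv
      omega
    have hrec : (((F' ×ˢ F').filter (fun p => G.Adj p.1 p.2)).card : ℝ) ≤ 2 * b * F'.card :=
      ih F' hF'card (fun x hx => hFA (Finset.mem_of_mem_erase hx))
    have hFcard : (F'.card : ℝ) = (F.card : ℝ) - 1 := by
      rw [Finset.card_erase_of_mem hv]
      have : 1 ≤ F.card := Finset.card_pos.mpr hne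
      push_cast [Nat.cast_sub this]; ring_nf
    have : ((((F ×ˢ F).filter (fun p => G.Adj p.1 p.2)).card : ℝ)) ≤
        (((F' ×ˢ F').filter (fun p => G.Adj p.1 p.2)).card : ℝ) + D.card + D.card := by
      have hn : ((F ×ˢ F).filter (fun p => G.Adj p.1 p.2)).card ≤
          (((F' ×ˢ F').filter (fun p => G.Adj p.1 p.2)).card + D.card) + D.card := by
        calc ((F ×ˢ F).filter (fun p => G.Adj p.1 p.2)).card
            ≤ ((((F' ×ˢ F').filter (fun p => G.Adj p.1 p.2)) ∪ ({v} ×ˢ D)) ∪ (D ×ˢ {v})).card := hcard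
          _ ≤ (((F' ×ˢ F').filter (fun p => G.Adj p.1 p.2)) ∪ ({v} ×ˢ D)).card + (D ×ˢ {v}).card := hu1
          _ ≤ (((F' ×ˢ F').filter (fun p => G.Adj p.1 p.2)).card + ({v} ×ˢ D).card) + (D ×ˢ {v}).card := by
              exact Nat.add_le_add_right hu2 _
          _ = (((F' ×ˢ F').filter (fun p => G.Adj p.1 p.2)).card + D.card) + D.card := by
              rw [hprod1, hprod2]
      exact_mod_cast hn
    calc ((((F ×ˢ F).filter (fun p => G.Adj p.1 p.2)).card : ℝ))
        ≤ (((F' ×ˢ F').filter (fun p => G.Adj p.1 p.2)).card : ℝ) + D.card + D.card := this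
      _ ≤ 2 * b * F'.card + b + b := by linarith
      _ ≤ 2 * b * F.card := by rw [hFcard]; ring_nf; linarith

section Cross
variable {W : Type} [Fintype W] {r : ℕ}

lemma cross_sum (G : SimpleGraph W) (P : Fin r → Finset W) {b : ℝ} {t : ℕ}
    (hcard : ∀ i : Fin r, (P i).card = t)
    (hdisj : ∀ i j : Fin r, i ≠ j → Disjoint (P i) (P j))
    (hdeg : ∀ i j : Fin r, i ≠ j → DegenerateOn G ((P i : Set W) ∪ (P j : Set W)) b)
    (i j : Fin r) (hij : i ≠ j) :
    (∑ u ∈ P j, (((P i).filter (fun v => G.Adj v u)).card : ℝ)) ≤ 4 * b * t := by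
  have hsum : ∑ u ∈ P j, ((P i).filter (fun v => G.Adj v u)).card =
      ((P j ×ˢ P i).filter (fun p => G.Adj p.2 p.1)).card := by
    rw [Finset.card_filter, Finset.sum_product]
    exact Finset.sum_congr rfl (fun u _ => (Finset.card_filter _ _))
  have hsub : ((P j ×ˢ P i).filter (fun p => G.Adj p.2 p.1)) ⊆
      (((P i ∪ P j) ×ˢ (P i ∪ P j)).filter (fun p => G.Adj p.1 p.2)) := by
    intro p hp
    rw [Finset.mem_filter, Finset.mem_product] at hp ⊢
    exact ⟨⟨Finset.mem_union_right _ hp.1.1, Finset.mem_union_left _ hp.1.2⟩, hp.2.symm⟩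
  have hb2 := pairs_card_le (hdeg i j hij) (P i ∪ P j).card (P i ∪ P j) le_rfl
    (by rw [Finset.coe_union])
  have hucard : ((P i ∪ P j).card : ℝ) = 2 * t := by
    rw [Finset.card_union_of_disjoint (hdisj i j hij), hcard i, hcard j]; push_cast; ring
  calc (∑ u ∈ P j, (((P i).filter (fun v => G.Adj v u)).card : ℝ))
      = (((P j ×ˢ P i).filter (fun p => G.Adj p.2 p.1)).card : ℝ) := by
        rw [← hsum]; push_cast; rfl
    _ ≤ ((((P i ∪ P j) ×ˢ (P i ∪ P j)).filter (fun p => G.Adj p.1 p.2)).card : ℝ) := by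
        exact_mod_cast Finset.card_le_card hsub
    _ ≤ 2 * b * ((P i ∪ P j).card : ℝ) := hb2
    _ = 4 * b * t := by rw [hucard]; ring

end Cross

section Main
variable {W : Type} [Fintype W] {r : ℕ}

lemma key_lemma (G : SimpleGraph W) (P : Fin r → Finset W) (w₀ : W) {b : ℝ} {t : ℕ}
    (ht : 1 ≤ t) (hb : 0 < b)
    (hcard : ∀ i : Fin r, (P i).card = t)
    (hdisj : ∀ i j : Fin r, i ≠ j → Disjoint (P i) (P j))
    (hdeg : ∀ i j : Fin r, i ≠ j → DegenerateOn G ((P i : Set W) ∪ (P j : Set W)) b)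
    (hineq : 17 * ((r : ℝ) - 1) * b ≤ (t : ℝ)) :
    ∀ (n : ℕ) (S : Finset (Fin r)), S.card ≤ n → ∀ i ∈ S,
      ((t : ℝ) / 2) * ((ITset G P w₀ (S.erase i)).card : ℝ) ≤ ((ITset G P w₀ S).card : ℝ) := by
  intro n
  induction n with
  | zero =>
    intro S hS i hi
    rw [Nat.le_zero, Finset.card_eq_zero] at hS
    subst hS; exact absurd hi (Finset.notMem_empty i)
  | succ n ih =>
    intro S hS i hi
    set S' := S.erase i with hS'
    have hScard : S'.card ≤ n := by
      rw [hS', Finset.card_erase_of_mem hi]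
      have hpos : 1 ≤ S.card := Finset.card_pos.mpr ⟨i, hi⟩
      omega
    set N' : ℝ := ((ITset G P w₀ S').card : ℝ) with hN'
    have hN'nonneg : 0 ≤ N' := Nat.cast_nonneg _
    set good := ((ITset G P w₀ S') ×ˢ (P i)).filter
        (fun p => ∀ j ∈ S', ¬ G.Adj p.2 (p.1 j)) with hgood
    -- good.card = ∑ over g of #good v's
    have hgcount : good.card = ∑ g ∈ ITset G P w₀ S',
        ((P i).filter (fun v => ∀ j ∈ S', ¬ G.Adj v (g j))).card := by
      rw [hgood, Finset.card_filter, Finset.sum_product]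
      exact Finset.sum_congr rfl (fun g _ => (Finset.card_filter _ _).symm)
    -- split t = good + bad for each g
    have hsplit : ∀ g : Fin r → W,
        ((P i).filter (fun v => ∀ j ∈ S', ¬ G.Adj v (g j))).card +
        ((P i).filter (fun v => ¬ ∀ j ∈ S', ¬ G.Adj v (g j))).card = t := by
      intro g
      rw [Finset.card_filter_add_card_filter_not, hcard i]
    -- bad count bound pointwise
    have hbadpt : ∀ g : Fin r → W,
        ((P i).filter (fun v => ¬ ∀ j ∈ S', ¬ G.Adj v (g j))).card ≤
          ∑ j ∈ S', ((P i).filter (fun v => G.Adj v (g j))).card := by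
      intro g
      calc ((P i).filter (fun v => ¬ ∀ j ∈ S', ¬ G.Adj v (g j))).card
          ≤ (S'.biUnion (fun j => (P i).filter (fun v => G.Adj v (g j)))).card := by
            apply Finset.card_le_card
            intro v hv
            rw [Finset.mem_filter] at hv
            push_neg at hv
            obtain ⟨hvP, j, hjS, hadj⟩ := hv
            exact Finset.mem_biUnion.mpr ⟨j, hjS, Finset.mem_filter.mpr ⟨hvP, hadj⟩⟩
        _ ≤ ∑ j ∈ S', ((P i).filter (fun v => G.Adj v (g j))).card := Finset.card_biUnion_le
    -- per-j sum bound using fibering + IH + cross_sum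
    have hperj : ∀ j ∈ S',
        (∑ g ∈ ITset G P w₀ S', (((P i).filter (fun v => G.Adj v (g j))).card : ℝ)) ≤
          8 * b * N' := by
      intro j hj
      have hji : j ≠ i := (Finset.mem_erase.mp hj).1
      have hfib : ∀ g ∈ ITset G P w₀ S', g j ∈ P j := by
        intro g hg
        have := (mem_ITset.mp hg).1 j
        simpa [hj] using this
      have hswap : (∑ g ∈ ITset G P w₀ S', (((P i).filter (fun v => G.Adj v (g j))).card : ℝ)) =
          ∑ u ∈ P j, ∑ g ∈ (ITset G P w₀ S').filter (fun g => g j = u),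
            (((P i).filter (fun v => G.Adj v (g j))).card : ℝ) :=
        (Finset.sum_fiberwise_of_maps_to hfib _).symm
      rw [hswap]
      have hih : ((ITset G P w₀ (S'.erase j)).card : ℝ) ≤ (2 / t) * N' := by
        have h2 := ih S' hScard j hj
        have htpos : (0 : ℝ) < t := by exact_mod_cast ht
        rw [div_mul_eq_mul_div, le_div_iff₀ htpos] at *
        nlinarith [h2]
      have hstep : ∀ u ∈ P j,
          (∑ g ∈ (ITset G P w₀ S').filter (fun g => g j = u),
            (((P i).filter (fun v => G.Adj v (g j))).card : ℝ)) ≤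
          ((2 / t) * N') * (((P i).filter (fun v => G.Adj v u)).card : ℝ) := by
        intro u hu
        have heq : ∀ g ∈ (ITset G P w₀ S').filter (fun g => g j = u),
            (((P i).filter (fun v => G.Adj v (g j))).card : ℝ) =
            (((P i).filter (fun v => G.Adj v u)).card : ℝ) := by
          intro g hg
          rw [(Finset.mem_filter.mp hg).2]
        rw [Finset.sum_congr rfl heq, Finset.sum_const, nsmul_eq_mul]
        have hf := fiber_le G P w₀ S' j u
        have : (((ITset G P w₀ S').filter (fun g => g j = u)).card : ℝ) ≤ (2 / t) * N' :=
          le_trans (by exact_mod_cast hf) hih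
        have hnn : (0 : ℝ) ≤ (((P i).filter (fun v => G.Adj v u)).card : ℝ) := Nat.cast_nonneg _
        exact mul_le_mul_of_nonneg_right this hnn
      calc (∑ u ∈ P j, ∑ g ∈ (ITset G P w₀ S').filter (fun g => g j = u),
            (((P i).filter (fun v => G.Adj v (g j))).card : ℝ))
          ≤ ∑ u ∈ P j, ((2 / t) * N') * (((P i).filter (fun v => G.Adj v u)).card : ℝ) :=
            Finset.sum_le_sum hstep
        _ = ((2 / t) * N') * ∑ u ∈ P j, (((P i).filter (fun v => G.Adj v u)).card : ℝ) := by
            rw [Finset.mul_sum]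
        _ ≤ ((2 / t) * N') * (4 * b * t) := by
            apply mul_le_mul_of_nonneg_left (cross_sum G P hcard hdisj hdeg i j (Ne.symm hji) )
            positivity
        _ = 8 * b * N' := by
            have ht0 : (t : ℝ) ≠ 0 := Nat.cast_ne_zero.mpr (Nat.one_le_iff_ne_zero.mp ht)
            field_simp
            ring
    -- assemble
    have hext := ext_le G P w₀ S i hi
    rw [← hS'] at hext
    rw [← hgood] at hext
    have hsum_split : good.card + ∑ g ∈ ITset G P w₀ S',
        ((P i).filter (fun v => ¬ ∀ j ∈ S', ¬ G.Adj v (g j))).card =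
        (ITset G P w₀ S').card * t := by
      rw [hgcount, ← Finset.sum_add_distrib,
        Finset.sum_congr rfl (fun g _ => hsplit g), Finset.sum_const, smul_eq_mul]
    have hbadsum : (∑ g ∈ ITset G P w₀ S',
        (((P i).filter (fun v => ¬ ∀ j ∈ S', ¬ G.Adj v (g j))).card : ℝ)) ≤
        8 * b * ((r : ℝ) - 1) * N' := by
      have hrpos : 0 < r := i.pos
      have hr1 : (S'.card : ℝ) ≤ (r : ℝ) - 1 := by
        have h2 : S'.card + 1 ≤ r := by
          have h3 := Finset.card_le_univ S
          rw [Fintype.card_fin] at h3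
          have hpos : 1 ≤ S.card := Finset.card_pos.mpr ⟨i, hi⟩
          rw [hS', Finset.card_erase_of_mem hi, Nat.sub_add_cancel hpos]
          exact h3
        have := (Nat.cast_le (α := ℝ)).mpr h2
        push_cast at this
        linarith
      calc (∑ g ∈ ITset G P w₀ S',
            (((P i).filter (fun v => ¬ ∀ j ∈ S', ¬ G.Adj v (g j))).card : ℝ))
          ≤ ∑ g ∈ ITset G P w₀ S', ∑ j ∈ S',
              (((P i).filter (fun v => G.Adj v (g j))).card : ℝ) := by
            apply Finset.sum_le_sum
            intro g _
            exact_mod_cast hbadpt g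
        _ = ∑ j ∈ S', ∑ g ∈ ITset G P w₀ S',
              (((P i).filter (fun v => G.Adj v (g j))).card : ℝ) := Finset.sum_comm
        _ ≤ ∑ j ∈ S', 8 * b * N' := Finset.sum_le_sum hperj
        _ = (S'.card : ℝ) * (8 * b * N') := by rw [Finset.sum_const, nsmul_eq_mul]
        _ ≤ ((r : ℝ) - 1) * (8 * b * N') := by
            apply mul_le_mul_of_nonneg_right hr1
            positivity
        _ = 8 * b * ((r : ℝ) - 1) * N' := by ring
    have hgoodreal : N' * t - 8 * b * ((r : ℝ) - 1) * N' ≤ (good.card : ℝ) := by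
      have := congrArg (fun x : ℕ => (x : ℝ)) hsum_split
      push_cast at this
      linarith
    have hrge : (0 : ℝ) ≤ (r : ℝ) - 1 := by
      have hrpos : 0 < r := i.pos
      have : (1 : ℝ) ≤ (r : ℝ) := by exact_mod_cast hrpos
      linarith
    have hfinal : ((t : ℝ) / 2) * N' ≤ (good.card : ℝ) := by
      nlinarith [hineq, hN'nonneg, hb.le, hgoodreal, mul_nonneg hN'nonneg hrge]
    exact le_trans hfinal (by exact_mod_cast hext)

end Main

section Final
variable {W : Type} [Fintype W] {r : ℕ}

lemma ITset_pos (G : SimpleGraph W) (P : Fin r → Finset W) (w₀ : W) {b : ℝ} {t : ℕ}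
    (ht : 1 ≤ t) (hb : 0 < b)
    (hcard : ∀ i : Fin r, (P i).card = t)
    (hdisj : ∀ i j : Fin r, i ≠ j → Disjoint (P i) (P j))
    (hdeg : ∀ i j : Fin r, i ≠ j → DegenerateOn G ((P i : Set W) ∪ (P j : Set W)) b)
    (hineq : 17 * ((r : ℝ) - 1) * b ≤ (t : ℝ)) :
    ∀ (n : ℕ) (S : Finset (Fin r)), S.card ≤ n → 0 < (ITset G P w₀ S).card := by
  intro n
  induction n with
  | zero =>
    intro S hS
    rw [Nat.le_zero, Finset.card_eq_zero] at hS
    subst hS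
    rw [Finset.card_pos]
    refine ⟨fun _ => w₀, mem_ITset.mpr ⟨fun i => by simp, fun i hi => absurd hi (Finset.notMem_empty i)⟩⟩
  | succ n ih =>
    intro S hS
    rcases S.eq_empty_or_nonempty with rfl | ⟨i, hi⟩
    · exact ih ∅ (by simp)
    have hkey := key_lemma G P w₀ ht hb hcard hdisj hdeg hineq (n + 1) S hS i hi
    have hprev : 0 < (ITset G P w₀ (S.erase i)).card := by
      apply ih
      rw [Finset.card_erase_of_mem hi]
      have hpos : 1 ≤ S.card := Finset.card_pos.mpr ⟨i, hi⟩
      omega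
    have h1 : (1 : ℝ) ≤ ((ITset G P w₀ (S.erase i)).card : ℝ) := by exact_mod_cast hprev
    have htpos : (1 : ℝ) ≤ (t : ℝ) := by exact_mod_cast ht
    have : (0 : ℝ) < ((ITset G P w₀ S).card : ℝ) := by nlinarith
    exact_mod_cast this

end Final


/-- If the vertex set of a finite simple graph `G` is partitioned
into `r` parts of size `t`, each union of two parts induces a `b`-degenerate
subgraph, and `t ≥ 17·(r-1)·b`, then `G` has an independent transversal of the
partition. -/
theorem statement12 (r t : ℕ) (hr : 1 ≤ r) (ht : 1 ≤ t) (b : ℝ) (hb : 0 < b)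
    (W : Type) [Fintype W] (G : SimpleGraph W)
    (P : Fin r → Finset W)
    (hdisj : ∀ i j : Fin r, i ≠ j → Disjoint (P i) (P j))
    (hcover : ∀ w : W, ∃ i : Fin r, w ∈ P i)
    (hcard : ∀ i : Fin r, (P i).card = t)
    (hineq : 17 * ((r : ℝ) - 1) * b ≤ (t : ℝ))
    (hdeg : ∀ i j : Fin r, i ≠ j → DegenerateOn G ((P i : Set W) ∪ (P j : Set W)) b) :
    ∃ v : Fin r → W, (∀ i, v i ∈ P i) ∧ ∀ i j : Fin r, i ≠ j → ¬ G.Adj (v i) (v j) := by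
  have i0 : Fin r := ⟨0, hr⟩
  have hne : (P i0).Nonempty := Finset.card_pos.mp (by rw [hcard i0]; omega)
  obtain ⟨w₀, _⟩ := hne
  have hpos := ITset_pos G P w₀ ht hb hcard hdisj hdeg hineq (Finset.univ.card)
    Finset.univ le_rfl
  rw [Finset.card_pos] at hpos
  obtain ⟨f, hf⟩ := hpos
  rw [mem_ITset] at hf
  refine ⟨f, fun i => ?_, fun i j hij => hf.2 i (Finset.mem_univ i) j (Finset.mem_univ j) hij⟩
  have := hf.1 i
  simpa using this
end

section
/- Let r and t be positive integers and b a positive real. Let G be a finite simple graph whose vertex set is partitioned into sets V_1, …, V_r, each of size exactly t, such that for all distinct i,j ∈ [r] the induced subgraph G[V_i ∪ V_j] is b-degenerate. Then for each i ∈ [r]: (1) the number of edges of G with exactly one endpoint in V_i is at most 2·t·b·(r−1); and (2) at least ⌈t/2⌉ vertices of V_i have at most 4·b·(r−1) neighbours outside V_i. -/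
open Classical

lemma pairsBound {W : Type} (G : SimpleGraph W) (b : ℝ)
    (A : Set W) (hA : DegenerateOn G A b) :
    ∀ (S : Finset W), (S : Set W) ⊆ A →
      (((S ×ˢ S).filter (fun q : W × W => G.Adj q.1 q.2)).card : ℝ) ≤ 2 * b * S.card := by
  classical
  intro S
  induction S using Finset.strongInduction with
  | _ S ih =>
    intro hS
    rcases S.eq_empty_or_nonempty with rfl | hne
    · simp
    obtain ⟨v, hv, hdv⟩ := hA S hS hne
    have hset : {u : W | u ∈ S ∧ G.Adj v u} = ↑(S.filter (fun u => G.Adj v u)) := by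
      ext u; simp
    rw [hset, Set.ncard_coe_finset] at hdv
    set S' := S.erase v with hS'
    have hsub : (S' : Set W) ⊆ A :=
      Set.Subset.trans (Finset.coe_subset.mpr (Finset.erase_subset v S)) hS
    have hih := ih S' (Finset.erase_ssubset hv) hsub
    have hdecomp : (S ×ˢ S).filter (fun q : W × W => G.Adj q.1 q.2) ⊆
        (((S' ×ˢ S').filter (fun q : W × W => G.Adj q.1 q.2)) ∪
        ({v} ×ˢ (S.filter (fun u => G.Adj v u)))) ∪
        ((S.filter (fun u => G.Adj u v)) ×ˢ {v}) := by
      intro q hq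
      simp only [Finset.mem_filter, Finset.mem_product] at hq
      obtain ⟨⟨h1, h2⟩, hadj⟩ := hq
      simp only [hS', Finset.mem_union, Finset.mem_filter, Finset.mem_product,
        Finset.mem_singleton, Finset.mem_erase]
      by_cases e1 : q.1 = v
      · exact Or.inl (Or.inr ⟨e1, h2, e1 ▸ hadj⟩)
      by_cases e2 : q.2 = v
      · exact Or.inr ⟨⟨h1, e2 ▸ hadj⟩, e2⟩
      · exact Or.inl (Or.inl ⟨⟨⟨e1, h1⟩, ⟨e2, h2⟩⟩, hadj⟩)
    have hcard := (Finset.card_le_card hdecomp).trans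
      ((Finset.card_union_le _ _).trans (Nat.add_le_add_right (Finset.card_union_le _ _) _))
    have h1 : (({v} : Finset W) ×ˢ (S.filter (fun u => G.Adj v u))).card
        = (S.filter (fun u => G.Adj v u)).card := by
      simp
    have h2 : ((S.filter (fun u => G.Adj u v)) ×ˢ ({v} : Finset W)).card
        = (S.filter (fun u => G.Adj v u)).card := by
      rw [Finset.card_product, Finset.card_singleton, mul_one]
      congr 1
      apply Finset.filter_congr
      intro u _; simp [G.adj_comm]
    rw [h1, h2] at hcard
    have hc1 : 1 ≤ S.card := Finset.card_pos.mpr hne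
    have hcS' : (S'.card : ℝ) = (S.card : ℝ) - 1 := by
      rw [hS', Finset.card_erase_of_mem hv]
      push_cast [Nat.cast_sub hc1]
      ring
    have hcard' : (((S ×ˢ S).filter (fun q : W × W => G.Adj q.1 q.2)).card : ℝ)
        ≤ ((S' ×ˢ S').filter (fun q : W × W => G.Adj q.1 q.2)).card
          + (S.filter (fun u => G.Adj v u)).card + (S.filter (fun u => G.Adj v u)).card := by
      exact_mod_cast hcard
    rw [hcS'] at hih
    linarith

/-- If the vertex set of a finite simple graph `G` is partitioned
into `r` parts of size `t` and each union of two parts induces a `b`-degenerate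
subgraph, then for each part `V_i`: (1) the number of edges with exactly one endpoint
in `V_i` (counted as ordered pairs `(u,v)` with `u ∈ V_i`, `v ∉ V_i`, `u ~ v`) is at
most `2·t·b·(r-1)`; and (2) at least `⌈t/2⌉` vertices of `V_i` have at most
`4·b·(r-1)` neighbours outside `V_i`. -/
theorem statement13 (r t : ℕ) (hr : 1 ≤ r) (ht : 1 ≤ t) (b : ℝ) (hb : 0 < b)
    (W : Type) [Fintype W] (G : SimpleGraph W)
    (P : Fin r → Finset W)
    (hdisj : ∀ i j : Fin r, i ≠ j → Disjoint (P i) (P j))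
    (hcover : ∀ w : W, ∃ i : Fin r, w ∈ P i)
    (hcard : ∀ i : Fin r, (P i).card = t)
    (hdeg : ∀ i j : Fin r, i ≠ j → DegenerateOn G ((P i : Set W) ∪ (P j : Set W)) b) :
    ∀ i : Fin r,
      (({q : W × W | q.1 ∈ P i ∧ q.2 ∉ P i ∧ G.Adj q.1 q.2}.ncard : ℝ) ≤
        2 * (t : ℝ) * b * ((r : ℝ) - 1)) ∧
      ((t + 1) / 2 ≤
        {v : W | v ∈ P i ∧
          (({u : W | u ∉ P i ∧ G.Adj v u}.ncard : ℝ) ≤ 4 * b * ((r : ℝ) - 1))}.ncard) := by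
  classical
  intro i
  have hr1 : (1 : ℝ) ≤ (r : ℝ) := by exact_mod_cast hr
  set outF : W → Finset W := fun v => Finset.univ.filter (fun u => u ∉ P i ∧ G.Adj v u)
    with houtF
  set X : Finset (W × W) :=
    Finset.univ.filter (fun q : W × W => q.1 ∈ P i ∧ q.2 ∉ P i ∧ G.Adj q.1 q.2) with hXdef
  set cross : Fin r → Finset (W × W) := fun j =>
    Finset.univ.filter (fun q : W × W => q.1 ∈ P i ∧ q.2 ∈ P j ∧ G.Adj q.1 q.2) with hcross
  -- bound on each cross set
  have crossBound : ∀ j : Fin r, j ≠ i → ((cross j).card : ℝ) ≤ 2 * b * t := by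
    intro j hj
    set C' : Finset (W × W) :=
      Finset.univ.filter (fun q : W × W => q.1 ∈ P j ∧ q.2 ∈ P i ∧ G.Adj q.1 q.2) with hC'
    have hCC' : C' = (cross j).image Prod.swap := by
      ext q
      simp only [hcross, hC', Finset.mem_image, Finset.mem_filter, Finset.mem_univ, true_and]
      constructor
      · rintro ⟨h1, h2, h3⟩
        exact ⟨q.swap, ⟨h2, h1, h3.symm⟩, Prod.swap_swap q⟩
      · rintro ⟨p, ⟨h1, h2, h3⟩, rfl⟩
        exact ⟨h2, h1, h3.symm⟩
    have hcardC' : C'.card = (cross j).card := by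
      rw [hCC', Finset.card_image_of_injective _ Prod.swap_injective]
    have hdisjCC' : Disjoint (cross j) C' := by
      rw [Finset.disjoint_left]
      intro q hq hq'
      simp only [hcross, hC', Finset.mem_filter, Finset.mem_univ, true_and] at hq hq'
      exact (Finset.disjoint_left.mp (hdisj i j (Ne.symm hj))) hq.1 hq'.1
    have hsubU : cross j ∪ C' ⊆
        ((P i ∪ P j) ×ˢ (P i ∪ P j)).filter (fun q : W × W => G.Adj q.1 q.2) := by
      intro q hq
      simp only [hcross, hC', Finset.mem_union, Finset.mem_filter, Finset.mem_univ, true_and,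
        Finset.mem_product] at hq ⊢
      rcases hq with ⟨h1, h2, h3⟩ | ⟨h1, h2, h3⟩
      · exact ⟨⟨Or.inl h1, Or.inr h2⟩, h3⟩
      · exact ⟨⟨Or.inr h1, Or.inl h2⟩, h3⟩
    have hpb := pairsBound G b _ (hdeg i j (Ne.symm hj)) (P i ∪ P j) (by rw [Finset.coe_union])
    have hUcard : (((P i ∪ P j) : Finset W).card : ℝ) = 2 * t := by
      rw [Finset.card_union_of_disjoint (hdisj i j (Ne.symm hj)), hcard i, hcard j]
      push_cast; ring
    have hn : (cross j).card + (cross j).card ≤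
        (((P i ∪ P j) ×ˢ (P i ∪ P j)).filter (fun q : W × W => G.Adj q.1 q.2)).card := by
      have h := Finset.card_le_card hsubU
      rwa [Finset.card_union_of_disjoint hdisjCC', hcardC'] at h
    have hnR : (((cross j).card : ℝ) + (cross j).card) ≤ 2 * b * (2 * t) := by
      calc (((cross j).card : ℝ) + (cross j).card)
          ≤ ((((P i ∪ P j) ×ˢ (P i ∪ P j)).filter (fun q : W × W => G.Adj q.1 q.2)).card : ℝ) := by
            exact_mod_cast hn
        _ ≤ 2 * b * (((P i ∪ P j) : Finset W).card : ℝ) := hpb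
        _ = 2 * b * (2 * t) := by rw [hUcard]
    linarith
  -- X is covered by the cross sets
  have hXsub : X ⊆ (Finset.univ.erase i).biUnion cross := by
    intro q hq
    simp only [hXdef, Finset.mem_filter, Finset.mem_univ, true_and] at hq
    obtain ⟨h1, h2, h3⟩ := hq
    obtain ⟨j, hj⟩ := hcover q.2
    have hji : j ≠ i := by rintro rfl; exact h2 hj
    simp only [Finset.mem_biUnion, Finset.mem_erase, Finset.mem_univ, true_and, hcross,
      Finset.mem_filter]
    exact ⟨j, ⟨hji, trivial⟩, h1, hj, h3⟩
  have hcarderase : (((Finset.univ : Finset (Fin r)).erase i).card : ℝ) = (r : ℝ) - 1 := by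
    rw [Finset.card_erase_of_mem (Finset.mem_univ i), Finset.card_univ, Fintype.card_fin,
      Nat.cast_sub hr]
    simp
  have hXbound : (X.card : ℝ) ≤ 2 * (t : ℝ) * b * ((r : ℝ) - 1) := by
    have hnat : X.card ≤ ∑ j ∈ Finset.univ.erase i, (cross j).card :=
      le_trans (Finset.card_le_card hXsub) (Finset.card_biUnion_le)
    calc (X.card : ℝ) ≤ ∑ j ∈ Finset.univ.erase i, ((cross j).card : ℝ) := by
          exact_mod_cast hnat
      _ ≤ ∑ _j ∈ Finset.univ.erase i, (2 * b * t) :=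
          Finset.sum_le_sum (fun j hj => crossBound j (Finset.mem_erase.mp hj).1)
      _ = (((Finset.univ : Finset (Fin r)).erase i).card : ℝ) * (2 * b * t) := by
          rw [Finset.sum_const, nsmul_eq_mul]
      _ = ((r : ℝ) - 1) * (2 * b * t) := by rw [hcarderase]
      _ = 2 * (t : ℝ) * b * ((r : ℝ) - 1) := by ring
  have hset1 : {q : W × W | q.1 ∈ P i ∧ q.2 ∉ P i ∧ G.Adj q.1 q.2} = ↑X := by
    ext q; simp [hXdef]
  refine ⟨by rw [hset1, Set.ncard_coe_finset]; exact hXbound, ?_⟩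
  -- part 2
  have hsum : X.card = ∑ v ∈ P i, (outF v).card := by
    rw [Finset.card_eq_sum_card_fiberwise (f := Prod.fst) (t := P i)
      (fun q hq => by simp only [hXdef, Finset.mem_coe, Finset.mem_filter, Finset.mem_univ, true_and] at hq
                      exact hq.1)]
    apply Finset.sum_congr rfl
    intro v hv
    apply Finset.card_bij (fun q _ => q.2)
    · intro q hq
      simp only [hXdef, Finset.mem_filter, Finset.mem_univ, true_and] at hq
      obtain ⟨⟨h1, h2, h3⟩, h4⟩ := hq
      simp only [houtF, Finset.mem_filter, Finset.mem_univ, true_and]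
      rw [← h4]
      exact ⟨h2, h3⟩
    · intro q1 h1 q2 h2 he
      simp only [Finset.mem_filter] at h1 h2
      exact Prod.ext (h1.2.trans h2.2.symm) he
    · intro u hu
      simp only [houtF, Finset.mem_filter, Finset.mem_univ, true_and] at hu
      refine ⟨(v, u), ?_, rfl⟩
      simp only [hXdef, Finset.mem_filter, Finset.mem_univ, true_and]
      exact ⟨⟨hv, hu.1, hu.2⟩, trivial⟩
  have hsumR : (∑ v ∈ P i, ((outF v).card : ℝ)) ≤ 2 * (t : ℝ) * b * ((r : ℝ) - 1) := by
    have hc : (X.card : ℝ) = ∑ v ∈ P i, ((outF v).card : ℝ) := by rw [hsum]; push_cast; ring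
    rw [← hc]; exact hXbound
  set Good := (P i).filter (fun v => ((outF v).card : ℝ) ≤ 4 * b * ((r : ℝ) - 1)) with hGood
  set Bad := (P i).filter (fun v => ¬ (((outF v).card : ℝ) ≤ 4 * b * ((r : ℝ) - 1))) with hBad
  have hGB : Good.card + Bad.card = t := by
    rw [hGood, hBad, Finset.card_filter_add_card_filter_not, hcard i]
  have hset2 : {v : W | v ∈ P i ∧
      (({u : W | u ∉ P i ∧ G.Adj v u}.ncard : ℝ) ≤ 4 * b * ((r : ℝ) - 1))} = ↑Good := by
    ext v
    have hcoe : {u : W | u ∉ P i ∧ G.Adj v u} = ↑(outF v) := by ext u; simp [houtF]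
    simp [hGood, hcoe, Set.ncard_coe_finset]
  rw [hset2, Set.ncard_coe_finset]
  have hBadBound : (Bad.card : ℝ) * (4 * b * ((r : ℝ) - 1)) ≤
      ∑ v ∈ P i, ((outF v).card : ℝ) := by
    calc (Bad.card : ℝ) * (4 * b * ((r : ℝ) - 1)) = Bad.card • (4 * b * ((r : ℝ) - 1)) := by
          rw [nsmul_eq_mul]
      _ ≤ ∑ v ∈ Bad, ((outF v).card : ℝ) := by
          apply Finset.card_nsmul_le_sum
          intro v hv
          exact (not_le.mp (Finset.mem_filter.mp hv).2).le
      _ ≤ ∑ v ∈ P i, ((outF v).card : ℝ) := by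
          apply Finset.sum_le_sum_of_subset_of_nonneg (Finset.filter_subset _ _)
          intro v _ _; positivity
  rcases Nat.lt_or_ge r 2 with h2 | h2
  · -- r = 1
    have hrr : (r : ℝ) - 1 = 0 := by
      have : r = 1 := by omega
      simp [this]
    have hBadempty : Bad = ∅ := by
      rw [Finset.eq_empty_iff_forall_notMem]
      intro v hv
      have hvP : v ∈ P i := (Finset.mem_filter.mp hv).1
      have hlt : 4 * b * ((r : ℝ) - 1) < (outF v).card :=
        not_le.mp (Finset.mem_filter.mp hv).2
      have hle : ((outF v).card : ℝ) ≤ ∑ v ∈ P i, ((outF v).card : ℝ) :=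
        Finset.single_le_sum (f := fun w => ((outF w).card : ℝ)) (fun w _ => by positivity) hvP
      rw [hrr] at hlt
      rw [hrr] at hsumR
      simp only [mul_zero] at hlt hsumR
      linarith
    have : Bad.card = 0 := by rw [hBadempty]; rfl
    omega
  · have hrpos : (0 : ℝ) < (r : ℝ) - 1 := by
      have : (2 : ℝ) ≤ (r : ℝ) := by exact_mod_cast h2
      linarith
    have hR : (Bad.card : ℝ) * 2 ≤ t := by
      nlinarith [mul_pos hb hrpos, hBadBound, hsumR]
    have hN : Bad.card * 2 ≤ t := by exact_mod_cast hR
    omega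
end
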